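/- Assume that every compact Hausdorff space with small diagonal is metrizable. Then every nonseparable real Banach space X satisfies cov(X) = ℵ₁. -/

import Mathlib

open Cardinal Set

universe u v

noncomputable section

/-- A hyperplane of a normed space: the kernel of a nonzero continuous linear functional. -/
def IsHyperplane {X : Type u} [NormedAddCommGroup X] [NormedSpace ℝ X] (H : Set X) : Prop :=
  ∃ f : X →L[ℝ] ℝ, f ≠ 0 ∧ H = {x | f x = 0}

/-- Member of the σ-ideal generated by hyperplanes: covered by countably many hyperplanes. -/
def InHyperplaneIdeal {X : Type u} [NormedAddCommGroup X] [NormedSpace ℝ X] (Y : Set X) : Prop :=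
  ∃ F : Set (Set X), F.Countable ∧ (∀ H ∈ F, IsHyperplane H) ∧ Y ⊆ ⋃₀ F

/-- Additivity of the hyperplane σ-ideal. -/
def addH (X : Type u) [NormedAddCommGroup X] [NormedSpace ℝ X] : Cardinal.{u} :=
  sInf {c | ∃ F : Set (Set X), (∀ A ∈ F, InHyperplaneIdeal A) ∧
    ¬ InHyperplaneIdeal (⋃₀ F) ∧ #F = c}

/-- Covering number of the hyperplane σ-ideal. -/
def covH (X : Type u) [NormedAddCommGroup X] [NormedSpace ℝ X] : Cardinal.{u} :=
  sInf {c | ∃ F : Set (Set X), (∀ A ∈ F, InHyperplaneIdeal A) ∧ ⋃₀ F = Set.univ ∧ #F = c}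

/-- Uniformity of the hyperplane σ-ideal. -/
def nonH (X : Type u) [NormedAddCommGroup X] [NormedSpace ℝ X] : Cardinal.{u} :=
  sInf {c | ∃ Y : Set X, ¬ InHyperplaneIdeal Y ∧ #Y = c}

/-- Cofinality of the hyperplane σ-ideal. -/
def cofH (X : Type u) [NormedAddCommGroup X] [NormedSpace ℝ X] : Cardinal.{u} :=
  sInf {c | ∃ F : Set (Set X), (∀ A ∈ F, InHyperplaneIdeal A) ∧
    (∀ Y : Set X, InHyperplaneIdeal Y → ∃ A ∈ F, Y ⊆ A) ∧ #F = c}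

/-- Density of a topological space: least cardinality of a dense subset. -/
def densH (X : Type u) [TopologicalSpace X] : Cardinal.{u} :=
  sInf {c | ∃ D : Set X, Dense D ∧ #D = c}

/-- `cf([κ]^ω)`: least cardinality of a cofinal family of countable subsets of κ. -/
def cfCtblSubsets (κ : Cardinal.{u}) : Cardinal.{u} :=
  sInf {c | ∃ F : Set (Set κ.out), (∀ S ∈ F, S.Countable) ∧
    (∀ S : Set κ.out, S.Countable → ∃ T ∈ F, S ⊆ T) ∧ #F = c}

/-- A compact space has small diagonal. -/
def HasSmallDiagonal (K : Type u) [TopologicalSpace K] : Prop :=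
  ∀ A : Set (K × K), #A = Cardinal.aleph 1 → A ∩ Set.diagonal K = ∅ →
    ∃ B ⊆ A, ¬ B.Countable ∧ closure B ∩ Set.diagonal K = ∅

/-- A topological space is scattered. -/
def IsScattered (K : Type u) [TopologicalSpace K] : Prop :=
  ∀ S : Set K, S.Nonempty → ∃ x ∈ S, ∃ U : Set K, IsOpen U ∧ U ∩ S = {x}


/-!
Let `K` be the closed unit ball of `X*` with the weak-* topology, a compact Hausdorff space.
Evaluation embeds `X` isometrically into `C(K)`, so if `K` were metrizable then `C(K)`, and
with it `X`, would be separable. Hence `K` does not have small diagonal: there is a set `A` of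
`ℵ₁` pairs `(f, g)` with `f ≠ g` such that every uncountable `B ⊆ A` accumulates at the
diagonal. The `ℵ₁` hyperplanes `ker (f - g)`, `(f, g) ∈ A`, cover `X`: if `x` lay on none of
them, some uncountable `B ⊆ A` would satisfy `|f x - g x| ≥ ε` throughout, a closed condition
that fails on the diagonal. Conversely, by Baire's theorem no countable family of hyperplanes
covers `X`.
-/

section DualBall

variable (X : Type u) [NormedAddCommGroup X] [NormedSpace ℝ X]

abbrev dualBall : Set (WeakDual ℝ X) :=
  WeakDual.toStrongDual ⁻¹' Metric.closedBall 0 1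

instance : CompactSpace (dualBall X) :=
  isCompact_iff_compactSpace.mp (WeakDual.isCompact_closedBall 0 1)

def evalDualBall : X →+ C(dualBall X, ℝ) where
  toFun x :=
    ⟨fun f => (f : WeakDual ℝ X) x, (WeakDual.eval_continuous x).comp continuous_subtype_val⟩
  map_zero' := by ext; simp
  map_add' x y := by ext; simp

theorem norm_evalDualBall (x : X) : ‖evalDualBall X x‖ = ‖x‖ := by
  refine le_antisymm ((ContinuousMap.norm_le _ (norm_nonneg x)).2 fun f => ?_) ?_
  · have hf : ‖WeakDual.toStrongDual f.1‖ ≤ 1 := mem_closedBall_zero_iff.1 f.2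
    calc ‖WeakDual.toStrongDual f.1 x‖ ≤ ‖WeakDual.toStrongDual f.1‖ * ‖x‖ :=
          (WeakDual.toStrongDual f.1).le_opNorm x
      _ ≤ ‖x‖ := mul_le_of_le_one_left (norm_nonneg x) hf
  · obtain ⟨g, hg, hgx⟩ := exists_dual_vector'' ℝ x
    calc ‖x‖ = ‖evalDualBall X x ⟨StrongDual.toWeakDual g, by simpa using hg⟩‖ := by
          simp [evalDualBall, hgx]
      _ ≤ ‖evalDualBall X x‖ := ContinuousMap.norm_coe_le_norm _ _

theorem separableSpace_of_metrizableSpace_dualBall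
    [TopologicalSpace.MetrizableSpace (dualBall X)] : TopologicalSpace.SeparableSpace X := by
  let := TopologicalSpace.metrizableSpaceMetric (dualBall X)
  have hiso : Isometry (evalDualBall X) :=
    AddMonoidHomClass.isometry_of_norm _ (norm_evalDualBall X)
  have : SecondCountableTopology X := hiso.isEmbedding.secondCountableTopology
  infer_instance

end DualBall

section HyperplaneIdeal

variable {X : Type u} [NormedAddCommGroup X] [NormedSpace ℝ X]

theorem IsHyperplane.isNowhereDense {H : Set X} (hH : IsHyperplane H) : IsNowhereDense H := by
  obtain ⟨f, hf, rfl⟩ := hH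
  rw [(isClosed_eq f.continuous continuous_const).isNowhereDense_iff,
    ← not_nonempty_iff_eq_empty]
  intro hint
  have hker := (LinearMap.ker (f : X →ₗ[ℝ] ℝ)).eq_top_of_nonempty_interior' hint
  exact hf (ContinuousLinearMap.coe_injective (LinearMap.ker_eq_top.1 hker))

theorem IsHyperplane.inHyperplaneIdeal {H : Set X} (hH : IsHyperplane H) :
    InHyperplaneIdeal H :=
  ⟨{H}, countable_singleton H, fun _ h => h ▸ hH, subset_sUnion_of_mem rfl⟩

theorem InHyperplaneIdeal.isMeagre {Y : Set X} (hY : InHyperplaneIdeal Y) : IsMeagre Y :=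
  let ⟨F, hF, hH, hYF⟩ := hY
  isMeagre_iff_countable_union_isNowhereDense.2
    ⟨F, fun H hHF => (hH H hHF).isNowhereDense, hF, hYF⟩

variable [CompleteSpace X]

theorem aleph_one_le_card_of_sUnion_eq_univ {F : Set (Set X)}
    (hF : ∀ A ∈ F, InHyperplaneIdeal A) (hU : ⋃₀ F = Set.univ) : ℵ₁ ≤ #F := by
  by_contra! hlt
  have hF_countable : F.Countable := le_aleph0_iff_set_countable.1 (lt_aleph_one_iff.1 hlt)
  apply not_isMeagre_of_isOpen (isOpen_univ (X := X)) univ_nonempty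
  rw [← hU, sUnion_eq_biUnion]
  exact isMeagre_biUnion hF_countable fun A hA => (hF A hA).isMeagre

theorem covH_eq_aleph_one_of_sUnion_eq_univ {F : Set (Set X)}
    (hF : ∀ A ∈ F, InHyperplaneIdeal A) (hU : ⋃₀ F = Set.univ) (hcard : #F ≤ ℵ₁) :
    covH X = ℵ₁ := by
  have hmem : ℵ₁ ∈ {c | ∃ F : Set (Set X),
      (∀ A ∈ F, InHyperplaneIdeal A) ∧ ⋃₀ F = Set.univ ∧ #F = c} :=
    ⟨F, hF, hU, hcard.antisymm (aleph_one_le_card_of_sUnion_eq_univ hF hU)⟩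
  refine (csInf_le' hmem).antisymm (le_csInf ⟨_, hmem⟩ ?_)
  rintro c ⟨F', hF', hU', rfl⟩
  exact aleph_one_le_card_of_sUnion_eq_univ hF' hU'

end HyperplaneIdeal

theorem countable_setOf_apply_ne_of_closure_inter_diagonal {K Y : Type*} [TopologicalSpace K]
    [MetricSpace Y] {A : Set (K × K)}
    (hA : ∀ B ⊆ A, ¬ B.Countable → closure B ∩ diagonal K ≠ ∅) {ψ : K → Y}
    (hψ : Continuous ψ) :
    {a ∈ A | ψ a.1 ≠ ψ a.2}.Countable := by
  let B (n : ℕ) : Set (K × K) := {a ∈ A | 1 / (n + 1 : ℝ) ≤ dist (ψ a.1) (ψ a.2)}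
  have hsub : {a ∈ A | ψ a.1 ≠ ψ a.2} ⊆ ⋃ n, B n := by
    rintro a ⟨ha, hne⟩
    obtain ⟨n, hn⟩ := exists_nat_one_div_lt (dist_pos.2 hne)
    exact mem_iUnion.2 ⟨n, ha, hn.le⟩
  refine (countable_iUnion fun n => ?_).mono hsub
  by_contra hB
  apply hA (B n) (sep_subset _ _) hB
  have hcl : closure (B n) ⊆ {a | 1 / (n + 1 : ℝ) ≤ dist (ψ a.1) (ψ a.2)} :=
    closure_minimal (fun a ha => ha.2)
      (isClosed_le continuous_const ((hψ.comp continuous_fst).dist (hψ.comp continuous_snd)))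
  refine eq_empty_of_forall_notMem fun a ⟨ha, hdiag⟩ => ?_
  have hdist : 1 / (n + 1 : ℝ) ≤ dist (ψ a.1) (ψ a.2) := hcl ha
  rw [show a.1 = a.2 from hdiag, dist_self] at hdist
  exact hdist.not_gt (by positivity)

/-- if every compact Hausdorff space with small diagonal is metrizable,
then every nonseparable Banach space X has cov(X) = ℵ₁. -/
theorem stmt14
    (hyp : ∀ (K : Type u) [TopologicalSpace K] [CompactSpace K] [T2Space K],
      HasSmallDiagonal K → TopologicalSpace.MetrizableSpace K)
    (X : Type u) [NormedAddCommGroup X] [NormedSpace ℝ X] [CompleteSpace X]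
    (hsep : ¬ TopologicalSpace.SeparableSpace X) :
    covH X = Cardinal.aleph 1 := by
  have hK : ¬ HasSmallDiagonal (dualBall X) := fun h =>
    hsep (have := hyp _ h; separableSpace_of_metrizableSpace_dualBall X)
  simp only [HasSmallDiagonal, not_forall, not_exists, not_and, exists_prop] at hK
  obtain ⟨A, hA, hoff, hclos⟩ := hK
  have hA_uncountable : ¬ A.Countable := by
    rw [← le_aleph0_iff_set_countable, ← lt_aleph_one_iff, hA]
    exact lt_irrefl _
  let ker (a : dualBall X × dualBall X) : Set X :=
    {x | (WeakDual.toStrongDual a.1.1 - WeakDual.toStrongDual a.2.1) x = 0}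
  refine covH_eq_aleph_one_of_sUnion_eq_univ (F := ker '' A) ?_ ?_ (hA ▸ mk_image_le)
  · rintro _ ⟨a, ha, rfl⟩
    refine IsHyperplane.inHyperplaneIdeal ⟨_, sub_ne_zero.2 fun h => ?_, rfl⟩
    exact hoff.subset ⟨ha, Subtype.ext (WeakDual.toStrongDual.injective h)⟩
  · refine eq_univ_of_forall fun x => ?_
    obtain ⟨a, ha, hax⟩ : ∃ a ∈ A, evalDualBall X x a.1 = evalDualBall X x a.2 := by
      by_contra! h
      have hcount := countable_setOf_apply_ne_of_closure_inter_diagonal hclos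
        (evalDualBall X x).continuous
      exact hA_uncountable (hcount.mono fun a ha => mem_sep ha (h a ha))
    exact ⟨ker a, mem_image_of_mem ker ha, sub_eq_zero.2 hax⟩

end
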